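/- Equivalence of the two big-step semantics for head reduction: v ⇓h v' if and only if v ⇓sf v' (Sestoft's semantics). -/
import Mathlib


/-- Untyped lambda terms with de Bruijn indices. -/
inductive Tm : Type
  | var : Nat → Tm
  | app : Tm → Tm → Tm
  | lam : Tm → Tm
deriving DecidableEq

/-- Shift free indices ≥ d up by one. -/
def lift (d : Nat) : Tm → Tm
  | .var n => if n < d then .var n else .var (n + 1)
  | .app a b => .app (lift d a) (lift d b)
  | .lam a => .lam (lift (d + 1) a)

/-- Capture-avoiding substitution of `u` for index `k`. -/
def subst (u : Tm) (k : Nat) : Tm → Tm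
  | .var n => if n = k then u else if k < n then .var (n - 1) else .var n
  | .app a b => .app (subst u k a) (subst u k b)
  | .lam a => .lam (subst (lift 0 u) (k + 1) a)

/-- Small-step weak-head (call-by-name) reduction: E[(λx.v)v'] ↦ E[v[v'/x]], E ::= □ | E v. -/
inductive Wh : Tm → Tm → Prop
  | beta (a b : Tm) : Wh (.app (.lam a) b) (subst b 0 a)
  | appL {a a' : Tm} (b : Tm) : Wh a a' → Wh (.app a b) (.app a' b)

/-- Neutral terms N ::= x | N v. -/
inductive Neutral : Tm → Prop
  | var (n : Nat) : Neutral (.var n)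
  | app {a : Tm} (b : Tm) : Neutral a → Neutral (.app a b)

/-- Weak-head normal forms: WHNF ::= N | λx.v. -/
inductive Whnf : Tm → Prop
  | neutral {a : Tm} : Neutral a → Whnf a
  | lam (a : Tm) : Whnf (.lam a)

/-- Head normal forms: HNF ::= N | λx.HNF. -/
inductive Hnf : Tm → Prop
  | neutral {a : Tm} : Neutral a → Hnf a
  | lam {a : Tm} : Hnf a → Hnf (.lam a)

/-- Small-step head reduction: S[(λx.v)v'] ↦ S[v[v'/x]], S ::= E | λx.S, E ::= □ | E v. -/
inductive Hd : Tm → Tm → Prop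
  | wh {a a' : Tm} : Wh a a' → Hd a a'
  | lam {a a' : Tm} : Hd a a' → Hd (.lam a) (.lam a')

/-- Full beta reduction (contraction in any context). -/
inductive Beta : Tm → Tm → Prop
  | beta (a b : Tm) : Beta (.app (.lam a) b) (subst b 0 a)
  | appL {a a' : Tm} (b : Tm) : Beta a a' → Beta (.app a b) (.app a' b)
  | appR {b b' : Tm} (a : Tm) : Beta b b' → Beta (.app a b) (.app a b')
  | lam {a a' : Tm} : Beta a a' → Beta (.lam a) (.lam a')

/-- Big-step weak-head evaluation. -/
inductive BigWh : Tm → Tm → Prop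
  | var (n : Nat) : BigWh (.var n) (.var n)
  | lam (a : Tm) : BigWh (.lam a) (.lam a)
  | beta {a a' b v : Tm} : BigWh a (.lam a') → BigWh (subst b 0 a') v → BigWh (.app a b) v
  | neu {a a' : Tm} (b : Tm) : BigWh a a' → (∀ t, a' ≠ .lam t) → BigWh (.app a b) (.app a' b)

/-- Big-step head evaluation, derived from weak-head evaluation. -/
inductive BigH : Tm → Tm → Prop
  | lam {v a a' : Tm} : BigWh v (.lam a) → BigH a a' → BigH v (.lam a')
  | notlam {v v' : Tm} : BigWh v v' → (∀ t, v' ≠ .lam t) → BigH v v'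

/-- Sestoft's big-step semantics for head reduction. -/
inductive Sf : Tm → Tm → Prop
  | var (n : Nat) : Sf (.var n) (.var n)
  | lam {a a' : Tm} : Sf a a' → Sf (.lam a) (.lam a')
  | neu {a a' : Tm} (b : Tm) : BigWh a a' → (∀ t, a' ≠ .lam t) → Sf (.app a b) (.app a' b)
  | beta {a a' b v : Tm} : BigWh a (.lam a') → Sf (subst b 0 a') v → Sf (.app a b) v

/-- Krivine machine: co-terms are lists of terms ([] = tp, (· :: ·) = call stack push). -/
abbrev KCmd := Tm × List Tm

/-- Krivine machine steps. -/
inductive KStep : KCmd → KCmd → Prop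
  | push (a b : Tm) (E : List Tm) : KStep (.app a b, E) (a, b :: E)
  | grab (a b : Tm) (E : List Tm) : KStep (.lam a, b :: E) (subst b 0 a, E)

/-- Readback/plugging of a Krivine command: plug⟨v | v'·E⟩ = plug⟨v v' | E⟩, plug⟨v | tp⟩ = v. -/
def plug : Tm → List Tm → Tm
  | v, [] => v
  | v, b :: E => plug (.app v b) E

/-- n-fold lambda abstraction: nLam n v = λ…λ.v with n lambdas. -/
def nLam : Nat → Tm → Tm
  | 0, v => v
  | n + 1, v => .lam (nLam n v)

/-- Co-terms of the head reduction abstract machine: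
`stuck n` is n-fold Abs applied to tp, `cons` pushes an argument. -/
inductive HCo : Type
  | stuck : Nat → HCo
  | cons : Tm → HCo → HCo

abbrev HCmd := Tm × HCo

/-- Head reduction abstract machine steps. -/
inductive HStep : HCmd → HCmd → Prop
  | push (a b : Tm) (E : HCo) : HStep (.app a b, E) (a, .cons b E)
  | grab (a b : Tm) (E : HCo) : HStep (.lam a, .cons b E) (subst b 0 a, E)
  | under (a : Tm) (n : Nat) : HStep (.lam a, .stuck n) (a, .stuck (n + 1))

/-- Readback of the head machine: ⟨v | v'·E⟩ ⇝ ⟨v v' | E⟩, ⟨v | Abs S⟩ ⇝ ⟨λ.v | S⟩, ⟨v | tp⟩ ⇝ v. -/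
def hread : Tm → HCo → Tm
  | v, .stuck n => nLam n v
  | v, .cons b E => hread (.app v b) E

/-- One readback step on head-machine commands. -/
inductive RStep : HCmd → HCmd → Prop
  | cons (v b : Tm) (E : HCo) : RStep (v, .cons b E) (.app v b, E)
  | abs (v : Tm) (n : Nat) : RStep (v, .stuck (n + 1)) (.lam v, .stuck n)

/-- Chains of exactly n readback steps. -/
inductive RStepN : Nat → HCmd → HCmd → Prop
  | refl (c : HCmd) : RStepN 0 c c
  | step {n : Nat} {c c' c'' : HCmd} : RStep c c' → RStepN n c' c'' → RStepN (n + 1) c c''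

/-- Length of a head-machine co-term: constructors above tp. -/
def colen : HCo → Nat
  | .stuck n => n
  | .cons _ E => colen E + 1

/-- All free indices are below k. -/
def ClosedUnder : Nat → Tm → Prop
  | k, .var n => n < k
  | k, .app a b => ClosedUnder k a ∧ ClosedUnder k b
  | k, .lam a => ClosedUnder (k + 1) a

/-- Eta-expansion relation: t is the eta-expansion of f. -/
def EtaExp (t f : Tm) : Prop := t = .lam (.app (lift 0 f) (.var 0))

lemma wh_val {v w : Tm} (h : BigWh v w) : BigWh w w := by
  induction h with
  | var n => exact BigWh.var n
  | lam a => exact BigWh.lam a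
  | beta _ _ _ ih2 => exact ih2
  | neu b h hn ih => exact BigWh.neu b ih hn

lemma wh_det {v w1 w2 : Tm} (h1 : BigWh v w1) (h2 : BigWh v w2) : w1 = w2 := by
  induction h1 generalizing w2 with
  | var n => cases h2; rfl
  | lam a => cases h2; rfl
  | beta ha hb iha ihb =>
    cases h2 with
    | beta ha' hb' =>
      have := iha ha'; injection this with e; subst e; exact ihb hb'
    | neu b ha' hn => exact absurd (iha ha') (by intro e; exact hn _ e.symm)
  | neu b ha hn iha =>
    cases h2 with
    | beta ha' hb' => exact absurd (iha ha') (hn _)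
    | neu b' ha' hn' => rw [iha ha']

lemma sf_of_wh {v w v' : Tm} (h : BigWh v w) (hs : Sf w v') : Sf v v' := by
  induction h generalizing v' with
  | var n => exact hs
  | lam a => exact hs
  | beta ha hb iha ihb => exact Sf.beta ha (ihb hs)
  | neu b ha hn iha =>
    cases hs with
    | neu _ ha' hn' =>
      have := wh_det (wh_val ha) ha'
      subst this
      exact Sf.neu b ha hn
    | beta ha' hs' => exact absurd (wh_det (wh_val ha) ha') (hn _)

lemma sf_self {v w : Tm} (h : BigWh v w) (hn : ∀ t, w ≠ .lam t) : Sf w w := by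
  induction h with
  | var n => exact Sf.var n
  | lam a => exact absurd rfl (hn _)
  | beta _ _ _ ih2 => exact ih2 hn
  | neu b ha hn' ih => exact Sf.neu b (wh_val ha) hn'

theorem bigh_iff_sestoft (v v' : Tm) : BigH v v' ↔ Sf v v' := by
  constructor
  · intro h
    induction h with
    | lam hw _ ih => exact sf_of_wh hw (Sf.lam ih)
    | notlam hw hn => exact sf_of_wh hw (sf_self hw hn)
  · intro h
    induction h with
    | var n => exact BigH.notlam (BigWh.var n) (fun t => by simp)
    | lam _ ih => exact BigH.lam (BigWh.lam _) ih
    | neu b hw hn => exact BigH.notlam (BigWh.neu b hw hn) (fun t => by simp)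
    | beta hw _ ih =>
      cases ih with
      | lam hw' hh => exact BigH.lam (BigWh.beta hw hw') hh
      | notlam hw' hn => exact BigH.notlam (BigWh.beta hw hw') hn
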